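/- Let A be a commutative ring, M a flat A-module, and {𝔞_λ}_{λ∈Λ} a family of ideals of A such that the natural map M ⊗_A ∏_λ (A/𝔞_λ) → ∏_λ (M ⊗_A A/𝔞_λ) is injective. Then (⋂_λ 𝔞_λ) M = ⋂_λ (𝔞_λ M) as submodules of M. -/
import Mathlib

universe v u

/-- If `M` is a flat `A`-module and the canonical map
`M ⊗ ∏ (A/𝔞_λ) → ∏ (M ⊗ A/𝔞_λ)` is injective, then `(⋂ 𝔞_λ)M = ⋂ (𝔞_λ M)`. -/
theorem stmt5 {A : Type u} {M : Type u} [CommRing A] [AddCommGroup M] [Module A M]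
    [Module.Flat A M] {Λ : Type u} (𝔞 : Λ → Ideal A)
    (hinj : Function.Injective
      (TensorProduct.piRightHom A A M (fun l : Λ => A ⧸ 𝔞 l))) :
    (⨅ l, 𝔞 l) • (⊤ : Submodule A M) = ⨅ l, (𝔞 l) • (⊤ : Submodule A M) := by
  set 𝔟 : Ideal A := ⨅ l, 𝔞 l with h𝔟
  set g : A →ₗ[A] ∀ l, A ⧸ 𝔞 l := LinearMap.pi (fun l => (𝔞 l).mkQ) with hg
  have hexact : Function.Exact (𝔟.subtype) g := by
    rw [LinearMap.exact_iff]
    ext x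
    simp [hg, Submodule.mem_iInf, LinearMap.mem_range, funext_iff,
      Submodule.Quotient.mk_eq_zero, h𝔟, Subtype.exists, Ideal.Quotient.eq_zero_iff_mem]
  have hexact2 := Module.Flat.lTensor_exact (R := A) M hexact
  apply le_antisymm
  · exact le_iInf fun l => Submodule.smul_mono_left (iInf_le _ l)
  · intro m hm
    simp only [Submodule.mem_iInf] at hm
    have h0 : g.lTensor M (m ⊗ₜ[A] (1 : A)) = 0 := by
      apply hinj
      rw [map_zero]
      ext l
      simp only [LinearMap.lTensor_tmul, hg, LinearMap.pi_apply,
        TensorProduct.piRightHom_tmul, Pi.zero_apply]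
      apply (TensorProduct.tensorQuotEquivQuotSMul M (𝔞 l)).injective
      rw [map_zero]
      have : ((𝔞 l).mkQ 1 : A ⧸ 𝔞 l) = Ideal.Quotient.mk (𝔞 l) 1 := rfl
      rw [this, TensorProduct.tensorQuotEquivQuotSMul_tmul_mk, one_smul,
        Submodule.Quotient.mk_eq_zero]
      exact hm l
    obtain ⟨y, hy⟩ := (hexact2 _).mp h0
    have : m = TensorProduct.rid A M ((𝔟.subtype).lTensor M y) := by
      rw [hy]; simp
    rw [this]
    clear this hy h0 hm
    induction y using TensorProduct.induction_on with
    | zero => simp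
    | tmul m' b =>
        simp only [LinearMap.lTensor_tmul, Submodule.coe_subtype,
          TensorProduct.rid_tmul]
        exact Submodule.smul_mem_smul b.2 trivial
    | add x y hx hy => rw [map_add, map_add]; exact add_mem hx hy
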